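/- (Relations between q-Genocchi and q-Bernoulli polynomials.) For every integer n ≥ 0, every positive integer m, and all x, y ∈ ℂ: (i) G_{n,q}(x,y) = (1/[n+1]_q) Σ_{k=0}^{n+1} m^{−(n−k)} [n+1 choose k]_q ( Σ_{j=0}^{k} [k choose j]_q ((−1;q)_{k−j}/(m^{k−j} 2^{k−j})) G_{j,q}(x) − G_{k,q}(x) ) B_{n+1−k,q}(my); and (ii) B_{n,q}(x,y) = (1/(2[n+1]_q)) Σ_{k=0}^{n+1} m^{−(n−k)} [n+1 choose k]_q ( Σ_{j=0}^{k} [k choose j]_q ((−1;q)_{k−j}/(m^{k−j} 2^{k−j})) B_{j,q}(x) + B_{k,q}(x) ) G_{n+1−k,q}(my). -/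

import Mathlib

open Finset PowerSeries

/-- The `q`-number `[n]_q = (1 - q^n)/(1 - q)`. -/
noncomputable def qNum (q : ℂ) (n : ℕ) : ℂ := (1 - q ^ n) / (1 - q)

/-- The `q`-factorial `[n]_q!`. -/
noncomputable def qFact (q : ℂ) : ℕ → ℂ
  | 0 => 1
  | n + 1 => qNum q (n + 1) * qFact q n

/-- The `q`-shifted factorial `(a; q)_n = ∏_{j=0}^{n-1} (1 - q^j a)`. -/
noncomputable def qShift (a q : ℂ) (n : ℕ) : ℂ := ∏ j ∈ Finset.range n, (1 - q ^ j * a)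

/-- The Gaussian binomial coefficient `[n choose k]_q = (q;q)_n / ((q;q)_{n-k} (q;q)_k)`. -/
noncomputable def qBinom (q : ℂ) (n k : ℕ) : ℂ :=
  qShift q q n / (qShift q q (n - k) * qShift q q k)

/-- The formal power series (in `t`) `𝓔_q(tx) = Σ_{n≥0} (-1;q)_n (x)^n t^n / (2^n [n]_q!)`. -/
noncomputable def qExp (q x : ℂ) : PowerSeries ℂ :=
  PowerSeries.mk fun n => qShift (-1) q n * x ^ n / (2 ^ n * qFact q n)

/-- The generating series `Σ_{n≥0} a_n t^n / [n]_q!` of a sequence `a`. -/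
noncomputable def qGen (q : ℂ) (a : ℕ → ℂ) : PowerSeries ℂ :=
  PowerSeries.mk fun n => a n / qFact q n

/-- The `q`-addition `(x ⊕_q y)^n`. -/
noncomputable def qAdd (q x y : ℂ) (n : ℕ) : ℂ :=
  ∑ k ∈ Finset.range (n + 1),
    qBinom q n k * (qShift (-1) q k * qShift (-1) q (n - k) / 2 ^ n) * x ^ k * y ^ (n - k)

/-!
Write `E_z(t) = 𝓔_q(tz)`. For (i), the generating series of `G(x,0)` times `E_{1/m} - 1`, times
the series of `B(my,0)` rescaled by `t ↦ t/m`, is `(t/m)` times the series of `G(x,y)`: multiplied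
by `E_1 + 1`, both sides become `2t E_x · (t/m) E_y`, by the defining relations of `G(x,0)`,
`B(my,0)` (rescaled) and `G(x,y)`. Products of series `Σ a_n tⁿ/[n]_q!` are `q`-binomial
convolutions, so comparing the coefficients of `t^{n+1}` gives (i). Part (ii) is the same argument
with the roles of `B` and `G` exchanged.
-/

theorem PowerSeries.rescale_C {R : Type*} [CommSemiring R] (c r : R) : rescale c (C r) = C r := by
  ext (_ | n) <;> simp [coeff_rescale, coeff_C]

lemma mul_mul_eq_of_mul_eq {R : Type*} [CommRing R] [IsDomain R] {a b c u v p w y : R}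
    (hu : u ≠ 0) (ha : a * u = p) (hb : b * v = w * y) (hc : c * u = p * y) :
    a * v * b = w * c :=
  mul_right_cancel₀ hu (by linear_combination b * v * ha + p * hb - w * hc)

section QCalculus

variable {q : ℂ}

lemma pow_succ_ne_one_of_norm_lt_one (hq : ‖q‖ < 1) (n : ℕ) : q ^ (n + 1) ≠ 1 := by
  intro h
  have : ‖q ^ (n + 1)‖ < 1 := by
    rw [norm_pow]
    exact pow_lt_one₀ (norm_nonneg q) hq n.succ_ne_zero
  simp [h] at this

lemma one_sub_ne_zero_of_norm_lt_one (hq : ‖q‖ < 1) : (1 : ℂ) - q ≠ 0 :=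
  sub_ne_zero.mpr (by simpa using (pow_succ_ne_one_of_norm_lt_one hq 0).symm)

lemma qNum_succ_ne_zero (hq : ‖q‖ < 1) (n : ℕ) : qNum q (n + 1) ≠ 0 :=
  div_ne_zero (sub_ne_zero.mpr (pow_succ_ne_one_of_norm_lt_one hq n).symm)
    (one_sub_ne_zero_of_norm_lt_one hq)

lemma qFact_succ (n : ℕ) : qFact q (n + 1) = qNum q (n + 1) * qFact q n := rfl

lemma qFact_ne_zero (hq : ‖q‖ < 1) : ∀ n, qFact q n ≠ 0
  | 0 => one_ne_zero
  | n + 1 => mul_ne_zero (qNum_succ_ne_zero hq n) (qFact_ne_zero hq n)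

lemma qFact_one (hq : ‖q‖ < 1) : qFact q 1 = 1 := by
  simp [qFact, qNum, one_sub_ne_zero_of_norm_lt_one hq]

lemma qShift_self_eq_pow_mul_qFact (hq : ‖q‖ < 1) : ∀ n, qShift q q n = (1 - q) ^ n * qFact q n
  | 0 => by simp [qShift, qFact]
  | n + 1 => by
    have hstep : 1 - q ^ n * q = (1 - q) * qNum q (n + 1) := by
      rw [qNum, mul_div_cancel₀ _ (one_sub_ne_zero_of_norm_lt_one hq), pow_succ]
    rw [qShift, prod_range_succ, ← qShift, qShift_self_eq_pow_mul_qFact hq n, qFact_succ, hstep]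
    ring

lemma qBinom_eq_qFact_div (hq : ‖q‖ < 1) {n k : ℕ} (h : k ≤ n) :
    qBinom q n k = qFact q n / (qFact q k * qFact q (n - k)) := by
  have h1 := one_sub_ne_zero_of_norm_lt_one hq
  have hF := qFact_ne_zero hq
  obtain ⟨d, rfl⟩ := Nat.exists_eq_add_of_le h
  rw [qBinom, Nat.add_sub_cancel_left, qShift_self_eq_pow_mul_qFact hq, qShift_self_eq_pow_mul_qFact hq, qShift_self_eq_pow_mul_qFact hq]
  field_simp
  ring

end QCalculus

noncomputable def qBinomConv (q : ℂ) (a b : ℕ → ℂ) (n : ℕ) : ℂ :=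
  ∑ k ∈ range (n + 1), qBinom q n k * a k * b (n - k)

section GeneratingSeries

variable {q : ℂ}

lemma qGen_mul (hq : ‖q‖ < 1) (a b : ℕ → ℂ) :
    qGen q a * qGen q b = qGen q (qBinomConv q a b) := by
  ext n
  simp only [qGen, qBinomConv, coeff_mul, coeff_mk, Nat.sum_antidiagonal_eq_sum_range_succ_mk,
    sum_div]
  refine sum_congr rfl fun k hk => ?_
  have hF := qFact_ne_zero hq
  rw [qBinom_eq_qFact_div hq (Nat.lt_succ_iff.mp (mem_range.mp hk))]
  field_simp [hF k, hF (n - k), hF n]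

lemma qGen_add (a b : ℕ → ℂ) : qGen q a + qGen q b = qGen q (a + b) := by
  ext n
  simp [qGen, add_div]

lemma qGen_mul_C (a : ℕ → ℂ) (c : ℂ) : qGen q a * C c = qGen q (c • a) := by
  ext n
  simp [qGen, mul_div_assoc, mul_comm]

lemma rescale_qGen (c : ℂ) (a : ℕ → ℂ) :
    rescale c (qGen q a) = qGen q (fun n => c ^ n * a n) := by
  ext n
  simp [qGen, coeff_rescale, mul_div_assoc]

lemma qExp_eq_qGen (z : ℂ) : qExp q z = qGen q (fun n => qShift (-1) q n * z ^ n / 2 ^ n) := by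
  ext n
  simp [qExp, qGen, div_div]

lemma rescale_qExp (c z : ℂ) : rescale c (qExp q z) = qExp q (c * z) := by
  ext n
  simp only [qExp, coeff_rescale, coeff_mk, mul_pow]
  ring

lemma qExp_zero : qExp q 0 = 1 := by
  ext (_ | n) <;> simp [qExp, qShift, qFact, coeff_one]

lemma qExp_one_add_C_ne_zero (hq : ‖q‖ < 1) (ε : ℂ) : qExp q 1 + C ε ≠ 0 := by
  intro h
  have h1 := congrArg (coeff 1) h
  simp [qExp, qShift, qFact_one hq] at h1

end GeneratingSeries

section Relations

variable {q : ℂ}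

lemma rescale_qGen_mul_qExp_add_C {b : ℕ → ℂ} {ε κ z : ℂ}
    (h : qGen q b * (qExp q 1 + C ε) = C κ * X * qExp q z) (c : ℂ) :
    qGen q (fun n => c ^ n * b n) * (qExp q c + C ε) = C (κ * c) * X * qExp q (c * z) := by
  have := congrArg (rescale c) h
  simpa [rescale_qGen, rescale_qExp, rescale_C, mul_assoc] using this

lemma qBinomConv_qShift_inv_pow (a : ℕ → ℂ) (z : ℂ) (k : ℕ) :
    qBinomConv q a (fun j => qShift (-1) q j * z⁻¹ ^ j / 2 ^ j) k =
      ∑ j ∈ range (k + 1), qBinom q k j * (qShift (-1) q (k - j) / (z ^ (k - j) * 2 ^ (k - j))) *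
        a j := by
  refine sum_congr rfl fun j _ => ?_
  dsimp only
  rw [inv_pow]
  ring

lemma mul_qBinomConv_inv_pow {z : ℂ} (hz : z ≠ 0) (A b : ℕ → ℂ) (n : ℕ) :
    z * qBinomConv q A (fun j => z⁻¹ ^ j * b j) (n + 1) =
      ∑ k ∈ range (n + 2), z ^ ((k : ℤ) - n) * qBinom q (n + 1) k * A k * b (n + 1 - k) := by
  rw [qBinomConv, mul_sum]
  refine sum_congr rfl fun k hk => ?_
  obtain ⟨d, hd⟩ : ∃ d, n + 1 = k + d := ⟨n + 1 - k, by have := mem_range.mp hk; omega⟩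
  rw [show (k : ℤ) - n = 1 - d by omega, hd, Nat.add_sub_cancel_left, zpow_sub₀ hz, zpow_one,
    zpow_natCast, inv_pow]
  ring

theorem eq_qBinom_sum_of_qGen_mul (hq : ‖q‖ < 1) {m : ℕ} (hm : (m : ℂ) ≠ 0) {ε κ y : ℂ}
    (hκ : κ ≠ 0) {a b g : ℕ → ℂ} {u p : ℂ⟦X⟧} (hu : u ≠ 0) (ha : qGen q a * u = p)
    (hg : qGen q g * u = p * qExp q y)
    (hb : qGen q b * (qExp q 1 + C ε) = C κ * X * qExp q (m * y)) (n : ℕ) :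
    g n = 1 / (κ * qNum q (n + 1)) * ∑ k ∈ range (n + 2),
        (m : ℂ) ^ ((k : ℤ) - (n : ℤ)) * qBinom q (n + 1) k *
          ((∑ j ∈ range (k + 1),
              qBinom q k j * (qShift (-1) q (k - j) / ((m : ℂ) ^ (k - j) * 2 ^ (k - j))) * a j)
            + ε * a k) * b (n + 1 - k) := by
  have hb' := rescale_qGen_mul_qExp_add_C hb (m : ℂ)⁻¹
  rw [inv_mul_cancel_left₀ hm] at hb'
  have hprod := mul_mul_eq_of_mul_eq hu ha hb' hg
  rw [mul_add, qExp_eq_qGen, qGen_mul hq, qGen_mul_C, qGen_add, qGen_mul hq, mul_assoc] at hprod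
  have hcoeff := congrArg (coeff (n + 1)) hprod
  rw [coeff_C_mul, coeff_succ_X_mul] at hcoeff
  simp only [qGen, coeff_mk] at hcoeff
  have hF := qFact_ne_zero hq n
  have hN := qNum_succ_ne_zero hq n
  calc g n = 1 / (κ * qNum q (n + 1)) * ((m : ℂ) * qBinomConv q
        (qBinomConv q a (fun j => qShift (-1) q j * (m : ℂ)⁻¹ ^ j / 2 ^ j) + ε • a)
        (fun j => (m : ℂ)⁻¹ ^ j * b j) (n + 1)) := by
        rw [qFact_succ, div_eq_iff (mul_ne_zero hN hF)] at hcoeff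
        rw [hcoeff]
        field_simp
    _ = _ := by
        rw [mul_qBinomConv_inv_pow hm]
        simp only [Pi.add_apply, Pi.smul_apply, smul_eq_mul, qBinomConv_qShift_inv_pow]

end Relations

theorem qGenocchi_qBernoulli_relations_general (q : ℂ)
    (hq1 : ‖q‖ < 1)
    (B G : ℂ → ℂ → ℕ → ℂ)
    (hB : ∀ x y : ℂ, qGen q (B x y) * (qExp q 1 - 1) = PowerSeries.X * qExp q x * qExp q y)
    (hG : ∀ x y : ℂ, qGen q (G x y) * (qExp q 1 + 1) = 2 * PowerSeries.X * qExp q x * qExp q y)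
    (n : ℕ) (m : ℕ) (hm : 0 < m) (x y : ℂ) :
    (G x y n = (1 / qNum q (n + 1)) * ∑ k ∈ Finset.range (n + 2),
        (m : ℂ) ^ ((k : ℤ) - (n : ℤ)) * qBinom q (n + 1) k *
          ((∑ j ∈ Finset.range (k + 1),
              qBinom q k j * (qShift (-1) q (k - j) / ((m : ℂ) ^ (k - j) * 2 ^ (k - j))) *
                G x 0 j)
            - G x 0 k) *
          B ((m : ℂ) * y) 0 (n + 1 - k)) ∧
    (B x y n = (1 / (2 * qNum q (n + 1))) * ∑ k ∈ Finset.range (n + 2),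
        (m : ℂ) ^ ((k : ℤ) - (n : ℤ)) * qBinom q (n + 1) k *
          ((∑ j ∈ Finset.range (k + 1),
              qBinom q k j * (qShift (-1) q (k - j) / ((m : ℂ) ^ (k - j) * 2 ^ (k - j))) *
                B x 0 j)
            + B x 0 k) *
          G ((m : ℂ) * y) 0 (n + 1 - k)) := by
  have hm0 : (m : ℂ) ≠ 0 := Nat.cast_ne_zero.mpr hm.ne'
  have hB0 (z : ℂ) : qGen q (B z 0) * (qExp q 1 + C (-1)) = C 1 * X * qExp q z := by
    simpa [qExp_zero, sub_eq_add_neg] using hB z 0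
  have hG0 (z : ℂ) : qGen q (G z 0) * (qExp q 1 + C 1) = C 2 * X * qExp q z := by
    simpa [qExp_zero, map_ofNat C 2] using hG z 0
  constructor
  · have hu : qExp q 1 + 1 ≠ 0 := by simpa using qExp_one_add_C_ne_zero hq1 1
    simpa [sub_eq_add_neg] using eq_qBinom_sum_of_qGen_mul hq1 hm0 one_ne_zero hu
      (by simpa [qExp_zero] using hG x 0) (hG x y) (hB0 (m * y)) n
  · have hu : qExp q 1 - 1 ≠ 0 := by simpa [sub_eq_add_neg] using qExp_one_add_C_ne_zero hq1 (-1)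
    simpa using eq_qBinom_sum_of_qGen_mul hq1 hm0 two_ne_zero hu
      (by simpa [qExp_zero] using hB x 0) (hB x y) (hG0 (m * y)) n

/-- Relations between the `q`-Genocchi and `q`-Bernoulli polynomials. -/
theorem qGenocchi_qBernoulli_relations (q : ℂ)
    (hq0 : 0 < ‖q‖) (hq1 : ‖q‖ < 1)
    (B G : ℂ → ℂ → ℕ → ℂ)
    (hB : ∀ x y : ℂ, qGen q (B x y) * (qExp q 1 - 1) = PowerSeries.X * qExp q x * qExp q y)
    (hG : ∀ x y : ℂ, qGen q (G x y) * (qExp q 1 + 1) = 2 * PowerSeries.X * qExp q x * qExp q y)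
    (n : ℕ) (m : ℕ) (hm : 0 < m) (x y : ℂ) :
    (G x y n = (1 / qNum q (n + 1)) * ∑ k ∈ Finset.range (n + 2),
        (m : ℂ) ^ ((k : ℤ) - (n : ℤ)) * qBinom q (n + 1) k *
          ((∑ j ∈ Finset.range (k + 1),
              qBinom q k j * (qShift (-1) q (k - j) / ((m : ℂ) ^ (k - j) * 2 ^ (k - j))) *
                G x 0 j)
            - G x 0 k) *
          B ((m : ℂ) * y) 0 (n + 1 - k)) ∧
    (B x y n = (1 / (2 * qNum q (n + 1))) * ∑ k ∈ Finset.range (n + 2),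
        (m : ℂ) ^ ((k : ℤ) - (n : ℤ)) * qBinom q (n + 1) k *
          ((∑ j ∈ Finset.range (k + 1),
              qBinom q k j * (qShift (-1) q (k - j) / ((m : ℂ) ^ (k - j) * 2 ^ (k - j))) *
                B x 0 j)
            + B x 0 k) *
          G ((m : ℂ) * y) 0 (n + 1 - k)) :=
  qGenocchi_qBernoulli_relations_general q hq1 B G hB hG n m hm x y
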